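/- Let C be a family of subsets of α closed under binary union and binary intersection. Define nestedDiff : List (Set α) → Set α by nestedDiff [] = ∅ and nestedDiff (A :: L) = A \ nestedDiff L. Then for every list L of sets all belonging to C, there exists a list L' of the same length, with all members in C, forming a decreasing chain (each successive set contained in the previous one), such that nestedDiff L = nestedDiff L'. (Every level of the boolean hierarchy over C admits a nested-chain normal form.) -/

import Mathlib

def nestedDiff {α : Type*} : List (Set α) → Set α
  | [] => ∅
  | A :: L => A \ nestedDiff L

lemma nestedDiff_map_inter {α : Type*} (A : Set α) (M : List (Set α)) :
    nestedDiff (M.map (A ∩ ·)) = A ∩ nestedDiff M := by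
  induction M with
  | nil => simp [nestedDiff]
  | cons B M ih =>
    simp only [List.map_cons, nestedDiff, ih]
    ext x
    simp only [Set.mem_diff, Set.mem_inter_iff]
    tauto

theorem stmt_9 {α : Type*} (C : Set (Set α))
    (hU : ∀ A ∈ C, ∀ B ∈ C, A ∪ B ∈ C)
    (hI : ∀ A ∈ C, ∀ B ∈ C, A ∩ B ∈ C)
    (L : List (Set α)) (hL : ∀ A ∈ L, A ∈ C) :
    ∃ L' : List (Set α), L'.length = L.length ∧ (∀ A ∈ L', A ∈ C) ∧
      List.Chain' (fun A B => B ⊆ A) L' ∧ nestedDiff L = nestedDiff L' := by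
  induction L with
  | nil => exact ⟨[], rfl, by simp, List.isChain_nil, rfl⟩
  | cons A L ih =>
    obtain ⟨M', hlen, hmem, hchain, heq⟩ :=
      ih (fun B hB => hL B (List.mem_cons_of_mem _ hB))
    have hA : A ∈ C := hL A (List.mem_cons_self)
    match M', hlen, hmem, hchain, heq with
    | [], hlen, hmem, hchain, heq =>
      refine ⟨[A], by simp [← hlen], by simpa, List.isChain_singleton _, ?_⟩
      simp [nestedDiff, heq]
    | B :: M, hlen, hmem, hchain, heq =>
      have hB : B ∈ C := hmem B (by simp)
      refine ⟨(A ∪ B) :: B :: M.map (A ∩ ·), by simp [← hlen], ?_, ?_, ?_⟩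
      · intro X hX
        simp only [List.mem_cons, List.mem_map] at hX
        rcases hX with rfl | rfl | ⟨Y, hY, rfl⟩
        · exact hU A hA B hB
        · exact hB
        · exact hI A hA Y (hmem Y (by simp [hY]))
      · unfold List.Chain' at hchain ⊢
        rw [List.isChain_cons] at hchain
        refine List.IsChain.cons_cons Set.subset_union_right ?_
        rw [List.isChain_cons]
        constructor
        · intro b hb
          rw [List.head?_map] at hb
          rw [Option.mem_def] at hb
          obtain ⟨Y, hY, rfl⟩ := Option.map_eq_some_iff.mp hb
          exact (Set.inter_subset_right).trans (hchain.1 Y hY)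
        · rw [List.isChain_map]
          exact hchain.2.imp (fun a b h => Set.inter_subset_inter_right A h)
      · show A \ nestedDiff L = (A ∪ B) \ nestedDiff (B :: M.map (A ∩ ·))
        rw [heq]
        show A \ (B \ nestedDiff M) = (A ∪ B) \ (B \ nestedDiff (M.map (A ∩ ·)))
        rw [nestedDiff_map_inter]
        ext x
        simp only [Set.mem_diff, Set.mem_union, Set.mem_inter_iff]
        tauto
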